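/- arXiv:1505.02222 — 6 statements merged into one kernel-verified Lean document; each statement's English description precedes it below -/
import Mathlib

section
/- Let H be an ordered triple system with the upper sum property. If Q is a k-bicycle (k ≥ 2) contained in H, then the two largest vertices of Q (in the ordering of H) are not its two antipodes. -/
/-- An ordered triple system (with edge family `E` over a linearly ordered vertex type)
has the *upper sum property* if whenever `{a,b,c}` and `{a,b',c'}` are edges with `c` and
`c'` the respective maxima of these triples, `b > b'` implies `c > c'`. -/
def HasUpperSumProperty {V : Type*} [LinearOrder V] (E : Set (Finset V)) : Prop :=
  ∀ a b c b' c' : V,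
    ({a, b, c} : Finset V) ∈ E → ({a, b', c'} : Finset V) ∈ E →
    a ≠ b → a < c → b < c → a ≠ b' → a < c' → b' < c' →
    b' < b → c' < c

/-- If `H` has the upper sum property and contains a `k`-bicycle (`k ≥ 2`) with antipodes
`va`, `vb`, then the two largest vertices of the bicycle are not its two antipodes. -/
theorem upper_sum_property_antipodes_not_max {V : Type*} [LinearOrder V]
    (E : Set (Finset V)) (hup : HasUpperSumProperty E)
    (k : ℕ) (hk : 2 ≤ k) (va vb : V) (f : ZMod (2 * k) → V)
    (hinj : Function.Injective f) (hfa : ∀ i, f i ≠ va) (hfb : ∀ i, f i ≠ vb)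
    (hab : va ≠ vb)
    (hedges : ∀ j : ℕ, j < k →
      ({va, f ((2 * j : ℕ) : ZMod (2 * k)), f ((2 * j + 1 : ℕ) : ZMod (2 * k))} : Finset V) ∈ E ∧
      ({vb, f (((2 * j : ℕ) : ZMod (2 * k)) - 1), f ((2 * j : ℕ) : ZMod (2 * k))} : Finset V) ∈ E) :
    ¬ (∀ i : ZMod (2 * k), f i < va ∧ f i < vb) := by
  intro hall
  have hk0 : 0 < k := by omega
  have hcast : ∀ j : ℕ, ((2*(j % k) : ℕ) : ZMod (2*k)) = ((2*j : ℕ) : ZMod (2*k)) := by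
    intro j
    conv_rhs => rw [← Nat.mod_add_div j k]
    push_cast
    have h : ((2*k : ℕ) : ZMod (2*k)) = 0 := ZMod.natCast_self _
    push_cast at h
    linear_combination (-(j/k : ℕ) : ZMod (2*k)) * h
  have fne : ∀ i j : ℕ, i < j → j < i + 2*k →
      f ((i:ℕ) : ZMod (2*k)) ≠ f ((j:ℕ) : ZMod (2*k)) := by
    intro i j h h2 he
    have := (ZMod.natCast_eq_natCast_iff i j (2*k)).mp (hinj he)
    have hd : ((2*k : ℕ) : ℤ) ∣ (j - i : ℤ) := this.dvd
    have := Int.le_of_dvd (by omega) hd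
    omega
  have hEA : ∀ j : ℕ,
      ({va, f ((2*j:ℕ) : ZMod (2*k)), f ((2*j+1:ℕ) : ZMod (2*k))} : Finset V) ∈ E := by
    intro j
    have h1 := (hedges (j % k) (Nat.mod_lt j hk0)).1
    have e1 := hcast j
    have e2 : ((2*(j%k)+1:ℕ) : ZMod (2*k)) = ((2*j+1:ℕ) : ZMod (2*k)) := by
      push_cast at e1 ⊢; linear_combination e1
    rw [e1, e2] at h1; exact h1
  have hEB : ∀ j : ℕ,
      ({vb, f ((2*j+1:ℕ) : ZMod (2*k)), f ((2*j+2:ℕ) : ZMod (2*k))} : Finset V) ∈ E := by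
    intro j
    have h1 := (hedges ((j+1) % k) (Nat.mod_lt _ hk0)).2
    have e0 := hcast (j+1)
    have e1 : ((2*((j+1)%k):ℕ) : ZMod (2*k)) = ((2*j+2:ℕ) : ZMod (2*k)) := by
      push_cast at e0 ⊢; linear_combination e0
    have e2 : ((2*((j+1)%k):ℕ) : ZMod (2*k)) - 1 = ((2*j+1:ℕ) : ZMod (2*k)) := by
      rw [e1]; push_cast; ring
    rw [e2, e1] at h1; exact h1
  rcases lt_or_gt_of_ne hab with hlt | hgt
  · -- va < vb : odd vertices strictly decrease
    have step : ∀ j : ℕ, f ((2*j+3:ℕ) : ZMod (2*k)) < f ((2*j+1:ℕ) : ZMod (2*k)) := by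
      intro j
      have hA := hEA (j+1)
      have hB := hEB j
      have eA : ({va, f ((2*(j+1):ℕ) : ZMod (2*k)), f ((2*(j+1)+1:ℕ) : ZMod (2*k))} : Finset V)
          = {f ((2*j+2:ℕ) : ZMod (2*k)), f ((2*j+3:ℕ) : ZMod (2*k)), va} := by
        have h2 : (2*(j+1) : ℕ) = 2*j+2 := by ring
        have h3 : (2*(j+1)+1 : ℕ) = 2*j+3 := by ring
        rw [h3, h2]; ext t; simp; tauto
      rw [eA] at hA
      have eB : ({vb, f ((2*j+1:ℕ) : ZMod (2*k)), f ((2*j+2:ℕ) : ZMod (2*k))} : Finset V)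
          = {f ((2*j+2:ℕ) : ZMod (2*k)), f ((2*j+1:ℕ) : ZMod (2*k)), vb} := by
        ext t; simp; tauto
      rw [eB] at hB
      by_contra hge
      have hne := fne (2*j+1) (2*j+3) (by omega) (by omega)
      have hlt13 : f ((2*j+1:ℕ) : ZMod (2*k)) < f ((2*j+3:ℕ) : ZMod (2*k)) :=
        lt_of_le_of_ne (not_lt.mp hge) hne
      have := hup (f ((2*j+2:ℕ) : ZMod (2*k))) (f ((2*j+3:ℕ) : ZMod (2*k))) va
        (f ((2*j+1:ℕ) : ZMod (2*k))) vb hA hB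
        (fne (2*j+2) (2*j+3) (by omega) (by omega))
        (hall _).1 (hall _).1
        (fne (2*j+1) (2*j+2) (by omega) (by omega)).symm
        (hall _).2 (hall _).2 hlt13
      exact absurd this (not_lt.mpr hlt.le)
    have chain : ∀ j : ℕ, f ((2*j+3:ℕ) : ZMod (2*k)) < f ((1:ℕ) : ZMod (2*k)) := by
      intro j
      induction j with
      | zero => simpa using step 0
      | succ n ih =>
          have h := step (n+1)
          have e : (2*(n+1)+1 : ℕ) = 2*n+3 := by ring
          rw [e] at h
          exact lt_trans h ih
    have hcyc : ((2*(k-1)+3 : ℕ) : ZMod (2*k)) = ((1:ℕ) : ZMod (2*k)) := by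
      have e : (2*(k-1)+3 : ℕ) = 2*k + 1 := by omega
      rw [e]
      have h0 : ((2*k : ℕ) : ZMod (2*k)) = 0 := ZMod.natCast_self _
      push_cast at h0 ⊢
      linear_combination h0
    have h := chain (k-1)
    rw [hcyc] at h
    exact lt_irrefl _ h
  · -- va > vb : even vertices strictly decrease
    have step : ∀ j : ℕ, f ((2*j+2:ℕ) : ZMod (2*k)) < f ((2*j:ℕ) : ZMod (2*k)) := by
      intro j
      have hA := hEA j
      have hB := hEB j
      have eA : ({va, f ((2*j:ℕ) : ZMod (2*k)), f ((2*j+1:ℕ) : ZMod (2*k))} : Finset V)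
          = {f ((2*j+1:ℕ) : ZMod (2*k)), f ((2*j:ℕ) : ZMod (2*k)), va} := by
        ext t; simp; tauto
      rw [eA] at hA
      have eB : ({vb, f ((2*j+1:ℕ) : ZMod (2*k)), f ((2*j+2:ℕ) : ZMod (2*k))} : Finset V)
          = {f ((2*j+1:ℕ) : ZMod (2*k)), f ((2*j+2:ℕ) : ZMod (2*k)), vb} := by
        ext t; simp; tauto
      rw [eB] at hB
      by_contra hge
      have hne := fne (2*j) (2*j+2) (by omega) (by omega)
      have hlt02 : f ((2*j:ℕ) : ZMod (2*k)) < f ((2*j+2:ℕ) : ZMod (2*k)) :=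
        lt_of_le_of_ne (not_lt.mp hge) hne
      have := hup (f ((2*j+1:ℕ) : ZMod (2*k))) (f ((2*j+2:ℕ) : ZMod (2*k))) vb
        (f ((2*j:ℕ) : ZMod (2*k))) va hB hA
        (fne (2*j+1) (2*j+2) (by omega) (by omega))
        (hall _).2 (hall _).2
        (fne (2*j) (2*j+1) (by omega) (by omega)).symm
        (hall _).1 (hall _).1 hlt02
      exact absurd this (not_lt.mpr hgt.le)
    have chain : ∀ j : ℕ, f ((2*j+2:ℕ) : ZMod (2*k)) < f ((0:ℕ) : ZMod (2*k)) := by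
      intro j
      induction j with
      | zero => simpa using step 0
      | succ n ih =>
          have h := step (n+1)
          have e : (2*(n+1) : ℕ) = 2*n+2 := by ring
          rw [e] at h
          exact lt_trans h ih
    have hcyc : ((2*(k-1)+2 : ℕ) : ZMod (2*k)) = ((0:ℕ) : ZMod (2*k)) := by
      have e : (2*(k-1)+2 : ℕ) = 2*k := by omega
      rw [e]; simp [ZMod.natCast_self]
    have h := chain (k-1)
    rw [hcyc] at h
    exact lt_irrefl _ h
end

section
/- Let H be an ordered triple system with the lower sum property. If Q is a k-bicycle (k ≥ 2) contained in H, then the two largest vertices of Q (in the ordering of H) are not its two antipodes. -/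
/-- An ordered triple system (with edge family `E` over a linearly ordered vertex type)
has the *lower sum property* if whenever `{a,b,c}` and `{a',b',c}` are edges having the
same maximum `c`, `a > a'` implies `b < b'`. -/
def HasLowerSumProperty {V : Type*} [LinearOrder V] (E : Set (Finset V)) : Prop :=
  ∀ a b a' b' c : V,
    ({a, b, c} : Finset V) ∈ E → ({a', b', c} : Finset V) ∈ E →
    a ≠ b → a < c → b < c → a' ≠ b' → a' < c → b' < c →
    a' < a → b < b'

/-- If `H` has the lower sum property and contains a `k`-bicycle (`k ≥ 2`) with antipodes
`va`, `vb`, then the two largest vertices of the bicycle are not its two antipodes. -/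
theorem lower_sum_property_antipodes_not_max {V : Type*} [LinearOrder V]
    (E : Set (Finset V)) (hup : HasLowerSumProperty E)
    (k : ℕ) (hk : 2 ≤ k) (va vb : V) (f : ZMod (2 * k) → V)
    (hinj : Function.Injective f) (hfa : ∀ i, f i ≠ va) (hfb : ∀ i, f i ≠ vb)
    (hab : va ≠ vb)
    (hedges : ∀ j : ℕ, j < k →
      ({va, f ((2 * j : ℕ) : ZMod (2 * k)), f ((2 * j + 1 : ℕ) : ZMod (2 * k))} : Finset V) ∈ E ∧
      ({vb, f (((2 * j : ℕ) : ZMod (2 * k)) - 1), f ((2 * j : ℕ) : ZMod (2 * k))} : Finset V) ∈ E) :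
    ¬ (∀ i : ZMod (2 * k), f i < va ∧ f i < vb) := by
  intro hall
  have hk0 : 0 < k := by omega
  -- basic arithmetic in `ZMod (2*k)`
  have h2ne : (2 : ZMod (2 * k)) ≠ 0 := by
    intro h
    have h' : ((2 : ℕ) : ZMod (2 * k)) = 0 := by push_cast; exact h
    rw [ZMod.natCast_eq_zero_iff] at h'
    have := Nat.le_of_dvd (by norm_num) h'
    omega
  have h1ne : (1 : ZMod (2 * k)) ≠ 0 := by
    intro h
    have h' : ((1 : ℕ) : ZMod (2 * k)) = 0 := by push_cast; exact h
    rw [ZMod.natCast_eq_zero_iff] at h'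
    have := Nat.le_of_dvd (by norm_num) h'
    omega
  have hk2 : (2 : ZMod (2 * k)) * (k : ℕ) = 0 := by
    have h := ZMod.natCast_self (2 * k)
    push_cast at h
    exact h
  set g : ℕ → ZMod (2 * k) := fun j => ((2 * j : ℕ) : ZMod (2 * k)) with hg
  have hmod : ∀ m : ℕ, g (m % k) = g m := by
    intro m
    show ((2 * (m % k) : ℕ) : ZMod (2 * k)) = ((2 * m : ℕ) : ZMod (2 * k))
    conv_rhs => rw [← Nat.mod_add_div m k]
    push_cast
    rw [mul_add, ← mul_assoc, hk2, zero_mul, add_zero]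
  -- distinctness of indices
  have hadd1 : ∀ x : ZMod (2 * k), x + 1 ≠ x := by
    intro x h
    have h' : x + 1 = x + 0 := by simpa using h
    exact h1ne (add_left_cancel h')
  have hsub1 : ∀ x : ZMod (2 * k), x ≠ x - 1 := by
    intro x h
    apply h1ne
    have : x - (x - 1) = 0 := by rw [← h]; ring
    simpa using this
  -- edges in convenient form
  have tri : ∀ x y z : V, ({x, y, z} : Finset V) = {z, x, y} := by
    intro x y z
    ext w
    simp only [Finset.mem_insert, Finset.mem_singleton]
    tauto
  have hedgeA : ∀ j, j < k → ({f (g j + 1), f (g j), va} : Finset V) ∈ E := by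
    intro j hj
    have h := (hedges j hj).1
    have hc : ((2 * j + 1 : ℕ) : ZMod (2 * k)) = g j + 1 := by
      show _ = ((2 * j : ℕ) : ZMod (2 * k)) + 1
      push_cast
      ring
    rw [hc] at h
    rw [tri]
    have e2 : ({va, f (g j + 1), f (g j)} : Finset V) = {va, f (g j), f (g j + 1)} := by
      ext w
      simp only [Finset.mem_insert, Finset.mem_singleton]
      tauto
    rw [e2]
    exact h
  have hedgeB : ∀ j, j < k → ({f (g j), f (g j - 1), vb} : Finset V) ∈ E := by
    intro j hj
    have h := (hedges j hj).2
    rw [tri]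
    have e2 : ({vb, f (g j), f (g j - 1)} : Finset V) = {vb, f (g j - 1), f (g j)} := by
      ext w
      simp only [Finset.mem_insert, Finset.mem_singleton]
      tauto
    rw [e2]
    exact h
  -- step 1 : use the `va`-edges
  have step1 : ∀ j j', j < k → j' < k →
      f (g j + 1) < f (g j' + 1) → f (g j') < f (g j) := by
    intro j j' hj hj' hlt
    exact hup (f (g j' + 1)) (f (g j')) (f (g j + 1)) (f (g j)) va
      (hedgeA j' hj') (hedgeA j hj)
      (fun h => hadd1 _ (hinj h)) (hall _).1 (hall _).1
      (fun h => hadd1 _ (hinj h)) (hall _).1 (hall _).1 hlt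
  -- step 2 : use the `vb`-edges
  have step2 : ∀ j j', j < k → j' < k →
      f (g j') < f (g j) → f (g j - 1) < f (g j' - 1) := by
    intro j j' hj hj' hlt
    exact hup (f (g j)) (f (g j - 1)) (f (g j')) (f (g j' - 1)) vb
      (hedgeB j hj) (hedgeB j' hj')
      (fun h => hsub1 _ (hinj h)) (hall _).2 (hall _).2
      (fun h => hsub1 _ (hinj h)) (hall _).2 (hall _).2 hlt
  have key : ∀ j j', j < k → j' < k →
      f (g j + 1) < f (g j' + 1) → f (g j - 1) < f (g j' - 1) := by
    intro j j' hj hj' hlt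
    exact step2 j j' hj hj' (step1 j j' hj hj' hlt)
  -- pick the index maximizing `f (g j + 1)`
  obtain ⟨j0, hj0mem, hj0max⟩ := Finset.exists_max_image (Finset.range k)
    (fun j => f (g j + 1)) ⟨0, Finset.mem_range.mpr hk0⟩
  have hj0 : j0 < k := Finset.mem_range.mp hj0mem
  set j1 := (j0 + 1) % k with hj1def
  have hj1 : j1 < k := Nat.mod_lt _ hk0
  set jp := (j0 + (k - 1)) % k with hjpdef
  have hjp : jp < k := Nat.mod_lt _ hk0
  have hg1 : g j1 = g j0 + 2 := by
    rw [hj1def, hmod]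
    show ((2 * (j0 + 1) : ℕ) : ZMod (2 * k)) = ((2 * j0 : ℕ) : ZMod (2 * k)) + 2
    push_cast
    ring
  have hgp : g jp = g j0 - 2 := by
    rw [hjpdef, hmod]
    show ((2 * (j0 + (k - 1)) : ℕ) : ZMod (2 * k)) = ((2 * j0 : ℕ) : ZMod (2 * k)) - 2
    push_cast [Nat.cast_sub (by omega : 1 ≤ k)]
    have : (2 : ZMod (2 * k)) * ((k : ℕ) - 1) = -2 := by
      rw [mul_sub, hk2]
      ring
    rw [mul_add, this]
    ring
  -- strict inequality at `j1`
  have hle : f (g j1 + 1) ≤ f (g j0 + 1) := hj0max j1 (Finset.mem_range.mpr hj1)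
  have hne : f (g j1 + 1) ≠ f (g j0 + 1) := by
    intro h
    have h' := hinj h
    rw [hg1] at h'
    have h'' : g j0 + (1 + 2) = g j0 + 1 := by rw [← h']; ring
    have h3 : (1 + 2 : ZMod (2 * k)) = 1 := add_left_cancel h''
    apply h2ne
    have : (1 + 2 : ZMod (2 * k)) - 1 = 1 - 1 := by rw [h3]
    simpa using this
  have hlt : f (g j1 + 1) < f (g j0 + 1) := lt_of_le_of_ne hle hne
  have hkey := key j1 j0 hj1 hj0 hlt
  -- rewrite both sides
  have e1 : g j1 - 1 = g j0 + 1 := by rw [hg1]; ring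
  have e2 : g j0 - 1 = g jp + 1 := by rw [hgp]; ring
  rw [e1, e2] at hkey
  exact absurd (lt_of_lt_of_le hkey (hj0max jp (Finset.mem_range.mpr hjp))) (lt_irrefl _)
end

section
/- The Pythagorean triple system PYTH contains no nontrivial Steiner triple system: there is no finite set W of positive integers with |W| ≥ 3 such that for every pair of distinct x, y ∈ W there is exactly one z ∈ W with {x,y,z} a Pythagorean triple, and such that the family of these Pythagorean triples within W has more than one member. -/
/-- A finite set of naturals is a Pythagorean triple if it consists of three distinct
positive integers `a`, `b`, `c` with `a² + b² = c²`. -/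
def IsPythTriple (s : Finset ℕ) : Prop :=
  ∃ a b c : ℕ, 0 < a ∧ 0 < b ∧ 0 < c ∧ a ≠ b ∧ a ≠ c ∧ b ≠ c ∧
    a ^ 2 + b ^ 2 = c ^ 2 ∧ s = {a, b, c}

private lemma sq_inj {a b : ℕ} (h : a ^ 2 = b ^ 2) : a = b :=
  Nat.pow_left_injective (by norm_num) h

private lemma le_of_sq_le {a b : ℕ} (h : a ^ 2 ≤ b ^ 2) : a ≤ b := by
  by_contra hc
  push_neg at hc
  have := Nat.pow_lt_pow_left hc (n := 2) (by norm_num)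
  omega

/-- In a Pythagorean triple, the strictly largest element is the hypotenuse. -/
private lemma pyth_mem_sum {s : Finset ℕ} {x y z : ℕ} (h : IsPythTriple s)
    (hx : x ∈ s) (hy : y ∈ s) (hz : z ∈ s) (hxy : x ≠ y) (hxz : x < z) (hyz : y < z) :
    x ^ 2 + y ^ 2 = z ^ 2 := by
  obtain ⟨a, b, c, ha, hb, hc, hab, hac, hbc, heq, rfl⟩ := h
  simp only [Finset.mem_insert, Finset.mem_singleton] at hx hy hz
  have hac' : a < c := by nlinarith
  have hbc' : b < c := by nlinarith
  rcases hx with rfl | rfl | rfl <;> rcases hy with rfl | rfl | rfl <;>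
    rcases hz with rfl | rfl | rfl <;> first | exact absurd rfl hxy | linarith

private lemma pyth_card3 {s : Finset ℕ} (h : IsPythTriple s) : s.card = 3 := by
  obtain ⟨a, b, c, _, _, _, hab, hac, hbc, _, rfl⟩ := h
  exact Finset.card_eq_three.mpr ⟨a, b, c, hab, hac, hbc, rfl⟩

private lemma pyth_third_ne {x y z : ℕ} (h : IsPythTriple ({x, y, z} : Finset ℕ)) :
    z ≠ x ∧ z ≠ y := by
  have h3 := pyth_card3 h
  constructor <;> rintro rfl
  · have he : ({z, y, z} : Finset ℕ) = {z, y} := by ext t; simp; try tauto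
    rw [he] at h3
    have := Finset.card_insert_le z ({y} : Finset ℕ)
    simp at this; omega
  · have he : ({x, z, z} : Finset ℕ) = {x, z} := by ext t; simp; try tauto
    rw [he] at h3
    have := Finset.card_insert_le x ({z} : Finset ℕ)
    simp at this; omega

private lemma pyth_mk {x y z : ℕ} (hx : 0 < x) (hy : 0 < y) (hxy : x ≠ y)
    (h : x ^ 2 + y ^ 2 = z ^ 2) : IsPythTriple ({x, y, z} : Finset ℕ) := by
  have hx2 : 0 < x ^ 2 := by positivity
  have hy2 : 0 < y ^ 2 := by positivity
  have hxz : x < z := by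
    by_contra hc
    push_neg at hc
    have := Nat.pow_le_pow_left hc 2
    omega
  have hyz : y < z := by
    by_contra hc
    push_neg at hc
    have := Nat.pow_le_pow_left hc 2
    omega
  have hz : 0 < z := lt_of_le_of_lt (Nat.zero_le x) hxz
  exact ⟨x, y, z, hx, hy, hz, hxy, hxz.ne, hyz.ne, h, rfl⟩

/-- The Pythagorean triple system contains no nontrivial Steiner triple system: there is
no finite set `W` of positive integers with `|W| ≥ 3` such that every pair of distinct
elements of `W` lies in exactly one Pythagorean triple inside `W`, with the family of
these triples having more than one member. -/
theorem pyth_no_sts :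
    ¬ ∃ W : Finset ℕ,
        (∀ n ∈ W, 0 < n) ∧ 3 ≤ W.card ∧
        (∀ x ∈ W, ∀ y ∈ W, x ≠ y →
          ∃! z, z ∈ W ∧ IsPythTriple ({x, y, z} : Finset ℕ)) ∧
        (∃ e f : Finset ℕ, e ≠ f ∧ e ⊆ W ∧ f ⊆ W ∧ IsPythTriple e ∧ IsPythTriple f) := by
  rintro ⟨W, hpos, hcard3, hsts, e, f, hef, heW, hfW, he, hf⟩
  -- |W| ≥ 4
  have hW4 : 4 ≤ W.card := by
    by_contra h
    have he3 := pyth_card3 he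
    have hf3 := pyth_card3 hf
    have he' : e = W := Finset.eq_of_subset_of_card_le heW (by omega)
    have hf' : f = W := Finset.eq_of_subset_of_card_le hfW (by omega)
    exact hef (he'.trans hf'.symm)
  have hWne : W.Nonempty := Finset.card_pos.mp (by omega)
  -- max m, min s
  set m := W.max' hWne with hmdef
  have hmW : m ∈ W := W.max'_mem hWne
  have hle_m : ∀ y ∈ W, y ≤ m := fun y hy => W.le_max' y hy
  set s := W.min' hWne with hsdef
  have hsW : s ∈ W := W.min'_mem hWne
  have hs_le : ∀ y ∈ W, s ≤ y := fun y hy => W.min'_le y hy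
  have hsm : s < m := W.min'_lt_max'_of_card (by omega)
  -- block extraction
  have block : ∀ x ∈ W, ∀ y ∈ W, x ≠ y →
      ∃ z, (z ∈ W ∧ IsPythTriple ({x, y, z} : Finset ℕ)) ∧ z ≠ x ∧ z ≠ y := by
    intro x hx y hy hxy
    obtain ⟨z, hz, -⟩ := hsts x hx y hy hxy
    exact ⟨z, hz, pyth_third_ne hz.2⟩
  -- sigma: complement with respect to m
  have sigma : ∀ y ∈ W, y ≠ m → ∃ z, z ∈ W ∧ z ≠ m ∧ z ≠ y ∧ y ^ 2 + z ^ 2 = m ^ 2 := by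
    intro y hy hym
    obtain ⟨z, ⟨hzW, hzp⟩, hzy, hzm⟩ := block y hy m hmW hym
    refine ⟨z, hzW, hzm, hzy, ?_⟩
    exact pyth_mem_sum hzp (by simp) (by simp) (by simp) hzy.symm
      (lt_of_le_of_ne (hle_m y hy) hym) (lt_of_le_of_ne (hle_m z hzW) hzm)
  -- m₂ : second largest
  have hWm_ne : (W.erase m).Nonempty := by
    rw [← Finset.card_pos, Finset.card_erase_of_mem hmW]; omega
  set m₂ := (W.erase m).max' hWm_ne with hm2def
  have hm₂W' : m₂ ∈ W.erase m := Finset.max'_mem _ _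
  have hm₂W : m₂ ∈ W := Finset.mem_of_mem_erase hm₂W'
  have hm₂m : m₂ ≠ m := Finset.ne_of_mem_erase hm₂W'
  have hm₂lt : m₂ < m := lt_of_le_of_ne (hle_m _ hm₂W) hm₂m
  have hle_m₂ : ∀ y ∈ W, y ≠ m → y ≤ m₂ := fun y hy hym =>
    Finset.le_max' _ y (Finset.mem_erase.mpr ⟨hym, hy⟩)
  -- key identity: s² + m₂² = m²
  obtain ⟨z1, hz1W, hz1m, hz1s, hz1⟩ := sigma s hsW hsm.ne
  obtain ⟨z2, hz2W, hz2m, hz2m₂, hz2⟩ := sigma m₂ hm₂W hm₂m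
  have hkey1 : s ^ 2 + m₂ ^ 2 = m ^ 2 := by
    have hz1le : z1 ≤ m₂ := hle_m₂ _ hz1W hz1m
    have h3 : s ^ 2 ≤ z2 ^ 2 := Nat.pow_le_pow_left (hs_le _ hz2W) 2
    have h4 : m₂ ^ 2 ≤ z1 ^ 2 := by linarith
    have : z1 = m₂ := le_antisymm hz1le (le_of_sq_le h4)
    rw [← this]; exact hz1
  -- s₂ : second smallest
  have hWs_ne : (W.erase s).Nonempty := by
    rw [← Finset.card_pos, Finset.card_erase_of_mem hsW]; omega
  set s₂ := (W.erase s).min' hWs_ne with hs2def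
  have hs₂W' : s₂ ∈ W.erase s := Finset.min'_mem _ _
  have hs₂W : s₂ ∈ W := Finset.mem_of_mem_erase hs₂W'
  have hs₂s : s₂ ≠ s := Finset.ne_of_mem_erase hs₂W'
  have hss₂ : s < s₂ := lt_of_le_of_ne (hs_le _ hs₂W) hs₂s.symm
  have hs₂_le : ∀ y ∈ W, y ≠ s → s₂ ≤ y := fun y hy hys =>
    Finset.min'_le _ y (Finset.mem_erase.mpr ⟨hys, hy⟩)
  -- s₂ < m₂
  have hs₂m₂ : s₂ < m₂ := by
    have hmWs : m ∈ W.erase s := Finset.mem_erase.mpr ⟨hsm.ne', hmW⟩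
    have hAcard : 1 < ((W.erase s).erase m).card := by
      rw [Finset.card_erase_of_mem hmWs, Finset.card_erase_of_mem hsW]; omega
    obtain ⟨a, ha, b, hb, hab⟩ := Finset.one_lt_card.mp hAcard
    have haW : a ∈ W := Finset.mem_of_mem_erase (Finset.mem_of_mem_erase ha)
    have hbW : b ∈ W := Finset.mem_of_mem_erase (Finset.mem_of_mem_erase hb)
    have h1 : s₂ ≤ a := hs₂_le _ haW (Finset.ne_of_mem_erase (Finset.mem_of_mem_erase ha))
    have h2 : s₂ ≤ b := hs₂_le _ hbW (Finset.ne_of_mem_erase (Finset.mem_of_mem_erase hb))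
    have h3 : a ≤ m₂ := hle_m₂ _ haW (Finset.ne_of_mem_erase ha)
    have h4 : b ≤ m₂ := hle_m₂ _ hbW (Finset.ne_of_mem_erase hb)
    omega
  have hsm₂ : s ≠ m₂ := (lt_trans hss₂ hs₂m₂).ne
  -- uniqueness consequence for the pair (s, m₂)
  have huniq_sm₂ : ∀ u ∈ W, u ≠ m → u ≠ s → u ^ 2 + s ^ 2 ≠ m₂ ^ 2 := by
    intro u huW hum hus heq
    obtain ⟨z, hz, huniq⟩ := hsts s hsW m₂ hm₂W hsm₂
    have p1 : IsPythTriple ({s, m₂, m} : Finset ℕ) :=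
      pyth_mk (hpos s hsW) (hpos m₂ hm₂W) hsm₂ hkey1
    have p2 : IsPythTriple ({s, m₂, u} : Finset ℕ) := by
      have hset : ({s, m₂, u} : Finset ℕ) = {s, u, m₂} := by
        rw [Finset.pair_comm m₂ u]
      rw [hset]
      exact pyth_mk (hpos s hsW) (hpos u huW) (Ne.symm hus) (by omega)
    have h1 := huniq m ⟨hmW, p1⟩
    have h2 := huniq u ⟨huW, p2⟩
    exact hum (h2.trans h1.symm)
  -- tau at s₂ : third point of block through {s₂, m₂}
  obtain ⟨z3, ⟨hz3W, hz3p⟩, hz3s₂, hz3m₂⟩ := block s₂ hs₂W m₂ hm₂W hs₂m₂.ne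
  have hz3m : z3 ≠ m := by
    rintro rfl
    have h := pyth_mem_sum hz3p (x := s₂) (y := m₂) (z := m) (by simp) (by simp) (by simp)
      hs₂m₂.ne (lt_trans hs₂m₂ hm₂lt) hm₂lt
    have : s₂ ^ 2 = s ^ 2 := by omega
    exact hs₂s (sq_inj this)
  have hτ : s₂ ^ 2 + z3 ^ 2 = m₂ ^ 2 := by
    refine pyth_mem_sum hz3p (by simp) (by simp) (by simp) hz3s₂.symm hs₂m₂
      (lt_of_le_of_ne (hle_m₂ _ hz3W hz3m) hz3m₂)
  have hz3s : z3 ≠ s := by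
    rintro rfl
    exact huniq_sm₂ s₂ hs₂W (lt_trans hs₂m₂ hm₂lt).ne hs₂s (by omega)
  -- sigma at s₂
  obtain ⟨z4, hz4W, hz4m, hz4s₂, hz4⟩ := sigma s₂ hs₂W (lt_trans hs₂m₂ hm₂lt).ne
  have hz4m₂ : z4 ≠ m₂ := by
    rintro rfl
    have : s₂ ^ 2 = s ^ 2 := by omega
    exact hs₂s (sq_inj this)
  have hz4s : z4 ≠ s := by
    rintro rfl
    have : s₂ ^ 2 = m₂ ^ 2 := by omega
    exact hs₂m₂.ne (sq_inj this)
  -- V and its max t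
  set V := ((W.erase m).erase m₂).erase s with hVdef
  have hmemV : ∀ y, y ∈ V ↔ y ∈ W ∧ y ≠ m ∧ y ≠ m₂ ∧ y ≠ s := by
    intro y
    simp only [hVdef, Finset.mem_erase]
    tauto
  have hs₂V : s₂ ∈ V := (hmemV s₂).mpr ⟨hs₂W, (lt_trans hs₂m₂ hm₂lt).ne, hs₂m₂.ne, hs₂s⟩
  have hVne : V.Nonempty := ⟨s₂, hs₂V⟩
  set t := V.max' hVne with htdef
  have htV := (hmemV t).mp (V.max'_mem hVne)
  obtain ⟨htW, htm, htm₂, hts⟩ := htV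
  have hle_t : ∀ y ∈ V, y ≤ t := fun y hy => V.le_max' y hy
  have hz3le : z3 ≤ t := hle_t z3 ((hmemV z3).mpr ⟨hz3W, hz3m, hz3m₂, hz3s⟩)
  have hz4le : z4 ≤ t := hle_t z4 ((hmemV z4).mpr ⟨hz4W, hz4m, hz4m₂, hz4s⟩)
  -- tau at t
  obtain ⟨z5, ⟨hz5W, hz5p⟩, hz5t, hz5m₂⟩ := block t htW m₂ hm₂W htm₂
  have htltm₂ : t < m₂ := lt_of_le_of_ne (hle_m₂ _ htW htm) htm₂
  have hz5m : z5 ≠ m := by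
    rintro rfl
    have h := pyth_mem_sum hz5p (x := t) (y := m₂) (z := m) (by simp) (by simp) (by simp)
      htm₂ (lt_of_le_of_ne (hle_m _ htW) htm) hm₂lt
    have : t ^ 2 = s ^ 2 := by omega
    exact hts (sq_inj this)
  have hτt : t ^ 2 + z5 ^ 2 = m₂ ^ 2 := by
    refine pyth_mem_sum hz5p (by simp) (by simp) (by simp) hz5t.symm htltm₂
      (lt_of_le_of_ne (hle_m₂ _ hz5W hz5m) hz5m₂)
  have hz5s : z5 ≠ s := by
    rintro rfl
    exact huniq_sm₂ t htW htm hts (by omega)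
  have hz5ge : s₂ ≤ z5 := hs₂_le _ hz5W hz5s
  have ht_le_z3 : t ≤ z3 := by
    have h1 : s₂ ^ 2 ≤ z5 ^ 2 := Nat.pow_le_pow_left hz5ge 2
    exact le_of_sq_le (by omega)
  -- sigma at t
  obtain ⟨z6, hz6W, hz6m, hz6t, hz6⟩ := sigma t htW htm
  have hz6s : z6 ≠ s := by
    rintro rfl
    have : t ^ 2 = m₂ ^ 2 := by omega
    exact htm₂ (sq_inj this)
  have hz6ge : s₂ ≤ z6 := hs₂_le _ hz6W hz6s
  have ht_le_z4 : t ≤ z4 := by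
    have h1 : s₂ ^ 2 ≤ z6 ^ 2 := Nat.pow_le_pow_left hz6ge 2
    exact le_of_sq_le (by omega)
  -- conclusion
  have hz3t : z3 = t := le_antisymm hz3le ht_le_z3
  have hz4t : z4 = t := le_antisymm hz4le ht_le_z4
  have : m₂ ^ 2 = m ^ 2 := by
    rw [hz3t] at hτ
    rw [hz4t] at hz4
    omega
  exact hm₂m (sq_inj this)
end

section
/- There do not exist two positive integers (squares) y² and z² such that both y² + z² and z² − y² are perfect squares of positive integers; equivalently, there are no positive integers x, y, z, t with x² + y² = z² and y² + z² = t². -/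
/-!
The two equations give `y⁴ + (x t)² = z⁴`, so it suffices that `z⁴ - y⁴` is never a nonzero
square (Fermat's right triangle theorem), which follows by infinite descent on `z` over primitive
solutions. If `y` is odd, the primitive Pythagorean triple `(y², k, z²)` is
`(m² - n², 2mn, m² + n²)` and `n⁴ + (y z)² = m⁴` with `m < z`. If `y` is even, the triple
`(k, y², z²)` yields `z² = a⁴ + 4b⁴`; the triple `(a², 2b², z)` is then
`(e⁴ - f⁴, 2e²f², e⁴ + f⁴)`, giving the smaller solution `f⁴ + a² = e⁴`.
-/

theorem Int.exists_sq_of_isCoprime_of_mul_eq_sq {m n d : ℤ} (h : IsCoprime m n) (hm : 0 ≤ m)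
    (heq : m * n = d ^ 2) : ∃ e, 0 ≤ e ∧ m = e ^ 2 := by
  obtain ⟨e, he | he⟩ := Int.sq_of_isCoprime h heq
  · exact ⟨|e|, abs_nonneg e, by rw [sq_abs, he]⟩
  · exact ⟨0, le_rfl, by nlinarith [sq_nonneg e]⟩

theorem Int.exists_sq_two_mul_sq_of_two_mul_mul_eq_sq {m n y : ℤ} (h : IsCoprime m n)
    (hm : 0 ≤ m) (hn : 0 ≤ n) (hm_odd : Odd m) (heq : 2 * m * n = y ^ 2) :
    ∃ a b, m = a ^ 2 ∧ n = 2 * b ^ 2 := by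
  obtain ⟨w, rfl⟩ : 2 ∣ y := by
    have : Even (y ^ 2) := ⟨m * n, by rw [← heq]; ring⟩
    exact (Int.even_pow.mp this).1.two_dvd
  have hmn : m * n = 2 * w ^ 2 := by linarith
  obtain ⟨n', rfl⟩ : 2 ∣ n := by
    have : Even (m * n) := ⟨w ^ 2, by rw [hmn]; ring⟩
    exact ((Int.even_mul.mp this).resolve_left (Int.not_even_iff_odd.mpr hm_odd)).two_dvd
  obtain ⟨a, -, rfl⟩ := Int.exists_sq_of_isCoprime_of_mul_eq_sq h.of_mul_right_right hm
    (by linarith : m * n' = w ^ 2)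
  obtain ⟨b, -, rfl⟩ := Int.exists_sq_of_isCoprime_of_mul_eq_sq h.of_mul_right_right.symm
    (by linarith) (by linarith : n' * a ^ 2 = w ^ 2)
  exact ⟨a, b, rfl, rfl⟩

structure PrimitiveQuarticDiff (y k z : ℤ) : Prop where
  y_ne_zero : y ≠ 0
  k_ne_zero : k ≠ 0
  z_pos : 0 < z
  isCoprime : IsCoprime y z
  eq : y ^ 4 + k ^ 2 = z ^ 4

theorem PrimitiveQuarticDiff.exists_lt_of_pow_four_add_four_mul_pow_four_eq_sq {a b z : ℤ}
    (ha : Odd a) (hb : b ≠ 0) (hab : IsCoprime a b) (hz : 0 < z)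
    (h : a ^ 4 + 4 * b ^ 4 = z ^ 2) : ∃ y' k' z', PrimitiveQuarticDiff y' k' z' ∧ z' < z := by
  have htriple : PythagoreanTriple (a ^ 2) (2 * b ^ 2) z := by
    unfold PythagoreanTriple; linear_combination h
  have hcop : Int.gcd (a ^ 2) (2 * b ^ 2) = 1 := by
    refine Int.isCoprime_iff_gcd_eq_one.mp (IsCoprime.mul_right ?_ (hab.pow (n := 2)))
    obtain ⟨j, hj⟩ := ha.pow (n := 2)
    exact ⟨1, -j, by linarith⟩
  obtain ⟨m, n, ha2, hb2, rfl, hgcd, -, hm⟩ :=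
    htriple.coprime_classification' hcop (Int.odd_iff.mp ha.pow) hz
  have hmn : IsCoprime m n := Int.isCoprime_iff_gcd_eq_one.mpr hgcd
  have hmn_sq : m * n = b ^ 2 := by linarith
  have hmn_pos : 0 < m * n := hmn_sq ▸ by positivity
  have hm_pos : 0 < m := by nlinarith
  have hn_pos : 0 < n := pos_of_mul_pos_right hmn_pos hm
  obtain ⟨e, he, rfl⟩ := Int.exists_sq_of_isCoprime_of_mul_eq_sq hmn hm hmn_sq
  obtain ⟨f, -, rfl⟩ := Int.exists_sq_of_isCoprime_of_mul_eq_sq hmn.symm hn_pos.le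
    (by linarith : n * e ^ 2 = b ^ 2)
  refine ⟨f, a, e, ⟨?_, ?_, ?_, ?_, ?_⟩, ?_⟩
  · rintro rfl; simp at hn_pos
  · rintro rfl; simp at ha
  · exact he.lt_of_ne (by rintro rfl; simp at hm_pos)
  · exact (IsCoprime.pow_iff two_pos two_pos).mp hmn.symm
  · linear_combination ha2
  · nlinarith

theorem PrimitiveQuarticDiff.isCoprime_y_k {y k z : ℤ} (h : PrimitiveQuarticDiff y k z) :
    IsCoprime y k := by
  have : IsCoprime y (z ^ 4 + y * -y ^ 3) := h.isCoprime.pow_right.add_mul_left_right _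
  rw [show z ^ 4 + y * -y ^ 3 = k ^ 2 by linear_combination -h.eq] at this
  exact IsCoprime.pow_right_iff two_pos |>.mp this

theorem PrimitiveQuarticDiff.exists_lt_of_odd {y k z : ℤ} (h : PrimitiveQuarticDiff y k z)
    (hy : Odd y) : ∃ y' k' z', PrimitiveQuarticDiff y' k' z' ∧ z' < z := by
  have htriple : PythagoreanTriple (y ^ 2) k (z ^ 2) := by
    unfold PythagoreanTriple; linear_combination h.eq
  obtain ⟨m, n, hy2, rfl, hz2, hmn, -, hm⟩ := htriple.coprime_classification'
    (Int.isCoprime_iff_gcd_eq_one.mp h.isCoprime_y_k.pow_left) (Int.odd_iff.mp hy.pow)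
    (pow_pos h.z_pos 2)
  have hn : n ≠ 0 := by rintro rfl; exact h.k_ne_zero (by ring)
  have hm_pos : 0 < m := hm.lt_of_ne (by rintro rfl; exact h.k_ne_zero (by ring))
  refine ⟨n, y * z, m, ⟨hn, mul_ne_zero h.y_ne_zero h.z_pos.ne', hm_pos,
    (Int.isCoprime_iff_gcd_eq_one.mpr hmn).symm, ?_⟩, ?_⟩
  · linear_combination z ^ 2 * hy2 + (m ^ 2 - n ^ 2) * hz2
  · exact lt_of_pow_lt_pow_left₀ 2 h.z_pos.le (by nlinarith [sq_pos_of_ne_zero hn])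

theorem PrimitiveQuarticDiff.exists_lt_of_two_mul_mul_eq_sq {m n y z : ℤ} (hmn : IsCoprime m n)
    (hm : 0 ≤ m) (hn : 0 ≤ n) (hm_odd : Odd m) (hy : y ≠ 0) (hz : 0 < z)
    (hy2 : y ^ 2 = 2 * m * n) (hz2 : z ^ 2 = m ^ 2 + n ^ 2) :
    ∃ y' k' z', PrimitiveQuarticDiff y' k' z' ∧ z' < z := by
  obtain ⟨a, b, rfl, rfl⟩ :=
    Int.exists_sq_two_mul_sq_of_two_mul_mul_eq_sq hmn hm hn hm_odd hy2.symm
  have hb : b ≠ 0 := by rintro rfl; simp_all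
  exact exists_lt_of_pow_four_add_four_mul_pow_four_eq_sq
    (Int.odd_pow' two_ne_zero |>.mp hm_odd) hb
    ((IsCoprime.pow_iff two_pos two_pos).mp hmn.of_mul_right_right) hz (by linear_combination -hz2)

theorem PrimitiveQuarticDiff.exists_lt_of_even {y k z : ℤ} (h : PrimitiveQuarticDiff y k z)
    (hy : Even y) : ∃ y' k' z', PrimitiveQuarticDiff y' k' z' ∧ z' < z := by
  have hz : ¬ Even z := fun hz ↦ by
    have := Int.isUnit_iff.mp (h.isCoprime.isUnit_of_dvd' hy.two_dvd hz.two_dvd)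
    omega
  have hk : k % 2 = 1 := by
    refine Int.odd_iff.mp (Int.not_even_iff_odd.mp fun hk ↦ hz ?_)
    have : Even (z ^ 4) := h.eq ▸
      (Int.even_pow.mpr ⟨hy, four_ne_zero⟩).add (Int.even_pow.mpr ⟨hk, two_ne_zero⟩)
    exact (Int.even_pow.mp this).1
  have htriple : PythagoreanTriple k (y ^ 2) (z ^ 2) := by
    unfold PythagoreanTriple; linear_combination h.eq
  obtain ⟨m, n, -, hy2, hz2, hgcd, hpar, hm⟩ := htriple.coprime_classification'
    (Int.isCoprime_iff_gcd_eq_one.mp h.isCoprime_y_k.symm.pow_right) hk (pow_pos h.z_pos 2)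
  have hmn : IsCoprime m n := Int.isCoprime_iff_gcd_eq_one.mpr hgcd
  have hn : 0 ≤ n :=
    (pos_of_mul_pos_right (hy2 ▸ sq_pos_of_ne_zero h.y_ne_zero) (by positivity)).le
  rcases hpar with ⟨-, hn_odd⟩ | ⟨hm_odd, -⟩
  · exact exists_lt_of_two_mul_mul_eq_sq hmn.symm hn hm (Int.odd_iff.mpr hn_odd) h.y_ne_zero
      h.z_pos (by linear_combination hy2) (by linear_combination hz2)
  · exact exists_lt_of_two_mul_mul_eq_sq hmn hm hn (Int.odd_iff.mpr hm_odd) h.y_ne_zero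
      h.z_pos hy2 hz2

theorem PrimitiveQuarticDiff.exists_lt {y k z : ℤ} (h : PrimitiveQuarticDiff y k z) :
    ∃ y' k' z', PrimitiveQuarticDiff y' k' z' ∧ z' < z :=
  (Int.even_or_odd y).elim h.exists_lt_of_even h.exists_lt_of_odd

theorem not_primitiveQuarticDiff {y k z : ℤ} : ¬ PrimitiveQuarticDiff y k z := by
  intro h
  induction hn : z.toNat using Nat.strong_induction_on generalizing y k z with
  | _ n ih =>
    obtain ⟨y', k', z', h', hlt⟩ := h.exists_lt
    exact ih z'.toNat (by have := h'.z_pos; omega) h' rfl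

theorem Int.pow_four_add_sq_ne_pow_four {y k z : ℤ} (hy : y ≠ 0) (hk : k ≠ 0) :
    y ^ 4 + k ^ 2 ≠ z ^ 4 := by
  intro h
  wlog hz : 0 < z generalizing z
  · have hz0 : z ≠ 0 := by
      rintro rfl
      have : 0 < y ^ 4 + k ^ 2 := by positivity
      simp_all
    exact this (z := -z) (by rw [h]; ring) (by omega)
  obtain ⟨g, y', z', hg, hgcd, rfl, rfl⟩ :=
    Int.exists_gcd_one' (Int.gcd_pos_of_ne_zero_left z hy)
  obtain ⟨k', rfl⟩ : (g : ℤ) ^ 2 ∣ k := by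
    rw [← Int.pow_dvd_pow_iff two_ne_zero]
    exact ⟨z' ^ 4 - y' ^ 4, by linear_combination h⟩
  have hg4 : (g : ℤ) ^ 4 ≠ 0 := by positivity
  refine not_primitiveQuarticDiff (y := y') (k := k') (z := z') ⟨?_, ?_, ?_, ?_, ?_⟩
  · rintro rfl; simp at hy
  · rintro rfl; simp at hk
  · exact pos_of_mul_pos_left hz (by positivity)
  · exact Int.isCoprime_iff_gcd_eq_one.mpr hgcd
  · exact mul_left_cancel₀ hg4 (by linear_combination h)

/-- There are no two positive squares `y²`, `z²` such that both their sum and their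
difference are again squares of positive integers; equivalently, there are no positive
integers `x, y, z, t` with `x² + y² = z²` and `y² + z² = t²`. -/
theorem no_sum_and_difference_of_squares :
    ¬ ∃ x y z t : ℕ, 0 < x ∧ 0 < y ∧ 0 < z ∧ 0 < t ∧
      x ^ 2 + y ^ 2 = z ^ 2 ∧ y ^ 2 + z ^ 2 = t ^ 2 := by
  rintro ⟨x, y, z, t, hx, hy, -, ht, hxyz, hyzt⟩
  have hxyz' : (x : ℤ) ^ 2 + y ^ 2 = z ^ 2 := by exact_mod_cast hxyz
  have hyzt' : (y : ℤ) ^ 2 + z ^ 2 = t ^ 2 := by exact_mod_cast hyzt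
  refine Int.pow_four_add_sq_ne_pow_four (y := y) (k := x * t) (z := z) (mod_cast hy.ne')
    (mod_cast (Nat.mul_pos hx ht).ne') ?_
  linear_combination (t : ℤ) ^ 2 * hxyz' + ((y : ℤ) ^ 2 - z ^ 2) * hyzt'
end

section
/- The Pythagorean triple system PYTH is linear: any two distinct Pythagorean triples intersect in at most one point. That is, if {a,b,c} and {a',b',c'} are sets of distinct positive integers with a² + b² = c² and a'² + b'² = c'², and the two sets share at least two elements, then they are equal. -/
/-!
If two Pythagorean triples share two numbers `x < y`, then either `x, y` are the legs of both,
or `x` is a leg and `y` the hypotenuse of both, and in either case the third number is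
determined; or else `x² + p² = y²` in one triple and `x² + y² = r²` in the other. In that last
case `y⁴ - x⁴ = (y² - x²)(y² + x²) = (p r)²`, which contradicts Fermat's theorem that
`X⁴ - Y⁴ = Z²` has no solutions with `Y Z ≠ 0`.

Fermat's theorem is proved by descent on `|X|`. After dividing out `gcd(X, Y)`, the triple
`(Y², Z, X²)` is primitive. If `Y` is odd, its parametrisation `Y² = m² - n²`, `X² = m² + n²`
gives the smaller solution `m⁴ - n⁴ = (X Y)²`. If `Y` is even, `Y² = 2 m n` forces
`X² = q⁴ + 4 p⁴`, and parametrising the primitive triple `(q², 2 p², X)` as `q² = r² - s²`,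
`p² = r s` with `r = ±u²`, `s = ±v²` gives the smaller solution `u⁴ - v⁴ = q²`.
-/

def FermatRightTriangle (x y z : ℤ) : Prop :=
  y ≠ 0 ∧ z ≠ 0 ∧ x ^ 4 - y ^ 4 = z ^ 2

lemma Int.sq_eq_pow_four_of_isCoprime {a b c : ℤ} (h : IsCoprime a b) (heq : a * b = c ^ 2) :
    ∃ d, a ^ 2 = d ^ 4 := by
  obtain ⟨d, rfl | rfl⟩ := Int.sq_of_isCoprime h heq <;> exact ⟨d, by ring⟩

namespace FermatRightTriangle

lemma exists_of_pow_four_add_four_mul_pow_four {q p t : ℤ} (hqp : IsCoprime q p) (hq : Odd q)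
    (hp : p ≠ 0) (ht : 0 < t) (h : q ^ 4 + 4 * p ^ 4 = t ^ 2) :
    ∃ u v, FermatRightTriangle u v q ∧ u ^ 2 < t := by
  have htri : PythagoreanTriple (q ^ 2) (2 * p ^ 2) t := by
    unfold PythagoreanTriple; linear_combination h
  have hcop : Int.gcd (q ^ 2) (2 * p ^ 2) = 1 := Int.isCoprime_iff_gcd_eq_one.mp <|
    ((Int.isCoprime_two_right.mpr hq).mul_right hqp.pow_right).pow_left
  obtain ⟨r, s, hq2, hp2, hrs, hgcd, -, -⟩ :=
    htri.coprime_classification' hcop (Int.odd_iff.mp hq.pow) ht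
  have hrs' : r * s = p ^ 2 := by linarith
  have hrsc : IsCoprime r s := Int.isCoprime_iff_gcd_eq_one.mpr hgcd
  obtain ⟨u, hu⟩ := Int.sq_eq_pow_four_of_isCoprime hrsc hrs'
  obtain ⟨v, hv⟩ := Int.sq_eq_pow_four_of_isCoprime hrsc.symm (by rw [mul_comm, hrs'])
  have hs : s ≠ 0 := by
    rintro rfl; exact hp (pow_eq_zero_iff two_ne_zero |>.mp (by simp [← hrs']))
  refine ⟨u, v, ⟨?_, ?_, by linear_combination hv - hu - hq2⟩, ?_⟩
  · rintro rfl; exact hs (pow_eq_zero_iff two_ne_zero |>.mp (by simp [hv]))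
  · rintro rfl; simp at hq
  · nlinarith [Int.le_self_sq (u ^ 2), pow_pos (sq_pos_of_ne_zero hs) 1]

lemma exists_natAbs_lt_of_sq_eq_two_mul {m n x y : ℤ} (hmn : IsCoprime m n) (hm : Even m)
    (hx : x ≠ 0) (hy : y ≠ 0) (hy2 : y ^ 2 = 2 * m * n) (hx2 : x ^ 2 = m ^ 2 + n ^ 2) :
    ∃ u v w, FermatRightTriangle u v w ∧ u.natAbs < x.natAbs := by
  obtain ⟨k, rfl⟩ := hm
  obtain ⟨w, rfl⟩ : Even y := (Int.even_pow' two_ne_zero).mp ⟨2 * k * n, by rw [hy2]; ring⟩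
  have hkn : k * n = w ^ 2 := by linarith
  have hkn' : IsCoprime k n := IsCoprime.of_mul_left_right (x := 2) (by rwa [two_mul])
  obtain ⟨p, hp⟩ := Int.sq_eq_pow_four_of_isCoprime hkn' hkn
  obtain ⟨q, hq⟩ := Int.sq_eq_pow_four_of_isCoprime hkn'.symm (by rw [mul_comm, hkn])
  have hn : Odd n :=
    Int.isCoprime_two_left.mp (IsCoprime.of_mul_left_left (y := k) (by rwa [two_mul]))
  have hqodd : Odd q := (Int.odd_pow' four_ne_zero).mp (hq ▸ hn.pow)
  have hqp : IsCoprime q p := (IsCoprime.pow_iff four_pos four_pos).mp (hq ▸ hp ▸ hkn'.symm.pow)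
  have hp0 : p ≠ 0 := by
    rintro rfl
    have : k = 0 := pow_eq_zero_iff two_ne_zero |>.mp (by simp [hp])
    subst this
    exact hy (by simpa using hkn.symm)
  obtain ⟨u, v, h, hu⟩ := exists_of_pow_four_add_four_mul_pow_four hqp hqodd hp0 (abs_pos.mpr hx)
    (by rw [sq_abs, hx2]; linear_combination -hq - 4 * hp)
  refine ⟨u, v, q, h, Int.natAbs_lt_iff_sq_lt.mpr ?_⟩
  linarith [Int.natCast_natAbs x ▸ Int.natAbs_le_self_sq x]

lemma exists_natAbs_lt_of_isCoprime {x y z : ℤ} (h : FermatRightTriangle x y z)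
    (hxy : IsCoprime x y) : ∃ x' y' z', FermatRightTriangle x' y' z' ∧ x'.natAbs < x.natAbs := by
  obtain ⟨hy, hz, heq⟩ := h
  have hx : x ≠ 0 := by rintro rfl; nlinarith [pow_pos (sq_pos_of_ne_zero hy) 2, sq_nonneg z]
  have htri : PythagoreanTriple (y ^ 2) z (x ^ 2) := by
    unfold PythagoreanTriple; linear_combination -heq
  have hcop : Int.gcd (y ^ 2) z = 1 := by
    rw [← Int.isCoprime_iff_gcd_eq_one, ← IsCoprime.pow_right_iff two_pos, ← heq]
    have h := (hxy.symm.pow (m := 2) (n := 4)).add_mul_left_right (-(y ^ 2))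
    rwa [show x ^ 4 + y ^ 2 * -y ^ 2 = x ^ 4 - y ^ 4 by ring] at h
  obtain ⟨m, n, hyz, hx2, hmn, hpar⟩ := PythagoreanTriple.coprime_classification.mp ⟨htri, hcop⟩
  replace hx2 : x ^ 2 = m ^ 2 + n ^ 2 :=
    hx2.resolve_right fun h => by nlinarith [sq_pos_of_ne_zero hx, sq_nonneg m, sq_nonneg n]
  have hmn' : IsCoprime m n := Int.isCoprime_iff_gcd_eq_one.mpr hmn
  rcases hyz with ⟨hy2, hz2⟩ | ⟨hy2, -⟩
  · have hn : n ≠ 0 := by rintro rfl; simp [hz2] at hz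
    refine ⟨m, n, x * y, ⟨hn, mul_ne_zero hx hy, ?_⟩, Int.natAbs_lt_iff_sq_lt.mpr ?_⟩
    · linear_combination -x ^ 2 * hy2 - (m ^ 2 - n ^ 2) * hx2
    · linarith [sq_pos_of_ne_zero hn]
  · rcases hpar with ⟨hm, -⟩ | ⟨-, hn⟩
    · exact exists_natAbs_lt_of_sq_eq_two_mul hmn' (Int.even_iff.mpr hm) hx hy hy2 hx2
    · exact exists_natAbs_lt_of_sq_eq_two_mul hmn'.symm (Int.even_iff.mpr hn) hx hy
        (by rw [hy2]; ring) (by rw [hx2]; ring)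

lemma exists_isCoprime {x y z : ℤ} (h : FermatRightTriangle x y z) :
    ∃ x' y' z', FermatRightTriangle x' y' z' ∧ IsCoprime x' y' ∧ x'.natAbs ≤ x.natAbs := by
  obtain ⟨hy, hz, heq⟩ := h
  obtain ⟨g, x', y', hg, hgcd, rfl, rfl⟩ :=
    Int.exists_gcd_one' (Int.gcd_pos_of_ne_zero_right x hy)
  obtain ⟨z', rfl⟩ : (g : ℤ) ^ 2 ∣ z := by
    rw [← Int.pow_dvd_pow_iff two_ne_zero, ← heq]
    exact ⟨x' ^ 4 - y' ^ 4, by ring⟩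
  refine ⟨x', y', z', ⟨?_, ?_, ?_⟩, Int.isCoprime_iff_gcd_eq_one.mpr hgcd, ?_⟩
  · rintro rfl; simp at hy
  · rintro rfl; simp at hz
  · apply mul_left_cancel₀ (pow_ne_zero 4 (Int.natCast_ne_zero.mpr hg.ne'))
    linear_combination heq
  · rw [Int.natAbs_mul]
    exact Nat.le_mul_of_pos_right _ (by simpa using hg)

end FermatRightTriangle

theorem not_fermatRightTriangle (x y z : ℤ) : ¬FermatRightTriangle x y z := by
  induction hn : x.natAbs using Nat.strong_induction_on generalizing x y z with
  | _ n ih =>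
    intro h
    obtain ⟨x₁, y₁, z₁, h₁, hcop, hle⟩ := h.exists_isCoprime
    obtain ⟨x₂, y₂, z₂, h₂, hlt⟩ := h₁.exists_natAbs_lt_of_isCoprime hcop
    exact ih _ (hn ▸ hlt.trans_le hle) x₂ y₂ z₂ rfl h₂

theorem Nat.sq_add_sq_ne_sq_of_sq_add_sq_eq_sq {x p q r : ℕ} (hx : x ≠ 0) (hp : p ≠ 0)
    (h : x ^ 2 + p ^ 2 = q ^ 2) : x ^ 2 + q ^ 2 ≠ r ^ 2 := by
  intro h'
  have hr : r ≠ 0 := by rintro rfl; simp_all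
  apply not_fermatRightTriangle q x (p * r)
  refine ⟨by exact_mod_cast hx, by exact_mod_cast mul_ne_zero hp hr, ?_⟩
  have h₁ : (x : ℤ) ^ 2 + p ^ 2 = q ^ 2 := by exact_mod_cast h
  have h₂ : (x : ℤ) ^ 2 + q ^ 2 = r ^ 2 := by exact_mod_cast h'
  linear_combination (q ^ 2 + x ^ 2) * h₁.symm + p ^ 2 * h₂

theorem eq_of_sq_add_sq_eq_sq_or {x y z z' : ℕ} (hx : x ≠ 0) (hxy : x < y)
    (hz : x ^ 2 + y ^ 2 = z ^ 2 ∨ x ^ 2 + z ^ 2 = y ^ 2)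
    (hz' : x ^ 2 + y ^ 2 = z' ^ 2 ∨ x ^ 2 + z' ^ 2 = y ^ 2) : z = z' := by
  have hsq : x ^ 2 < y ^ 2 := Nat.pow_lt_pow_left hxy two_ne_zero
  rcases hz with hz | hz <;> rcases hz' with hz' | hz'
  · exact Nat.pow_left_injective two_ne_zero (hz.symm.trans hz')
  · exact absurd hz (Nat.sq_add_sq_ne_sq_of_sq_add_sq_eq_sq hx (by rintro rfl; omega) hz')
  · exact absurd hz' (Nat.sq_add_sq_ne_sq_of_sq_add_sq_eq_sq hx (by rintro rfl; omega) hz)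
  · exact Nat.pow_left_injective two_ne_zero (show z ^ 2 = z' ^ 2 by omega)

theorem exists_third_side_of_mem_of_lt {a b c x y : ℕ} (ha : 0 < a) (hb : 0 < b)
    (h : a ^ 2 + b ^ 2 = c ^ 2) (hx : x ∈ ({a, b, c} : Finset ℕ)) (hy : y ∈ ({a, b, c} : Finset ℕ))
    (hxy : x < y) : ∃ z, ({a, b, c} : Finset ℕ) = {x, y, z} ∧
      (x ^ 2 + y ^ 2 = z ^ 2 ∨ x ^ 2 + z ^ 2 = y ^ 2) := by
  have hac : a < c := (Nat.pow_lt_pow_iff_left two_ne_zero).mp (by nlinarith)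
  have hbc : b < c := (Nat.pow_lt_pow_iff_left two_ne_zero).mp (by nlinarith)
  simp only [Finset.mem_insert, Finset.mem_singleton] at hx hy
  rcases hx with hx | hx | hx <;> rcases hy with hy | hy | hy <;> subst x y <;> try omega
  · exact ⟨c, rfl, .inl h⟩
  · exact ⟨b, by rw [Finset.pair_comm], .inr h⟩
  · exact ⟨c, Finset.insert_comm _ _ _, .inl (by rw [add_comm, h])⟩
  · exact ⟨a, by rw [Finset.insert_comm a b, Finset.pair_comm a c], .inr (by rw [add_comm, h])⟩

theorem pyth_is_linear_general (a b c a' b' c' : ℕ)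
    (ha : 0 < a) (hb : 0 < b) (hc : 0 < c)
    (ha' : 0 < a') (hb' : 0 < b')
    (heq : a ^ 2 + b ^ 2 = c ^ 2) (heq' : a' ^ 2 + b' ^ 2 = c' ^ 2)
    (hshare : 2 ≤ (({a, b, c} : Finset ℕ) ∩ ({a', b', c'} : Finset ℕ)).card) :
    ({a, b, c} : Finset ℕ) = ({a', b', c'} : Finset ℕ) := by
  obtain ⟨x, hx, y, hy, hxy⟩ := Finset.one_lt_card.mp hshare
  wlog hlt : x < y generalizing x y
  · exact this y hy x hx hxy.symm (hxy.symm.lt_of_le (not_lt.mp hlt))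
  rw [Finset.mem_inter] at hx hy
  obtain ⟨z, hT, hz⟩ := exists_third_side_of_mem_of_lt ha hb heq hx.1 hy.1 hlt
  obtain ⟨z', hT', hz'⟩ := exists_third_side_of_mem_of_lt ha' hb' heq' hx.2 hy.2 hlt
  have hx0 : 0 < x := by
    simp only [Finset.mem_insert, Finset.mem_singleton] at hx
    omega
  rw [hT, hT', eq_of_sq_add_sq_eq_sq_or hx0.ne' hlt hz hz']

/-- The Pythagorean triple system is linear: two distinct Pythagorean triples intersect
in at most one point. That is, if `{a,b,c}` and `{a',b',c'}` are sets of distinct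
positive integers with `a² + b² = c²` and `a'² + b'² = c'²` sharing at least two
elements, then they are equal. -/
theorem pyth_is_linear (a b c a' b' c' : ℕ)
    (ha : 0 < a) (hb : 0 < b) (hc : 0 < c)
    (ha' : 0 < a') (hb' : 0 < b') (hc' : 0 < c')
    (hab : a ≠ b) (hac : a ≠ c) (hbc : b ≠ c)
    (hab' : a' ≠ b') (hac' : a' ≠ c') (hbc' : b' ≠ c')
    (heq : a ^ 2 + b ^ 2 = c ^ 2) (heq' : a' ^ 2 + b' ^ 2 = c' ^ 2)
    (hshare : 2 ≤ (({a, b, c} : Finset ℕ) ∩ ({a', b', c'} : Finset ℕ)).card) :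
    ({a, b, c} : Finset ℕ) = ({a', b', c'} : Finset ℕ) :=
  pyth_is_linear_general a b c a' b' c' ha hb hc ha' hb' heq heq' hshare
end

section
/- Correctness of Dickson's method: positive integers x, y, z satisfy x² + y² = z² if and only if there exist positive integers r, s, t with r² = 2·s·t, x = r + s, y = r + t, and z = r + s + t. -/
/-- Correctness of Dickson's method for generating Pythagorean triples: positive integers
`x, y, z` satisfy `x² + y² = z²` if and only if there exist positive integers `r, s, t`
with `r² = 2st`, `x = r + s`, `y = r + t`, and `z = r + s + t`. -/
theorem dickson_method_correct (x y z : ℕ) (hx : 0 < x) (hy : 0 < y) (hz : 0 < z) :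
    x ^ 2 + y ^ 2 = z ^ 2 ↔
      ∃ r s t : ℕ, 0 < r ∧ 0 < s ∧ 0 < t ∧
        r ^ 2 = 2 * s * t ∧ x = r + s ∧ y = r + t ∧ z = r + s + t := by
  constructor
  · intro h
    have hxz : x < z := by nlinarith
    have hyz : y < z := by nlinarith
    have hzxy : z < x + y := by nlinarith
    refine ⟨x + y - z, z - y, z - x, by omega, by omega, by omega, ?_, by omega, by omega, by omega⟩
    have h' : (x : ℤ) ^ 2 + y ^ 2 = z ^ 2 := by exact_mod_cast h
    zify [hxz.le, hyz.le, hzxy.le]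
    nlinarith [h']
  · rintro ⟨r, s, t, hr, hs, ht, h2, rfl, rfl, rfl⟩
    nlinarith [h2]
end
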